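/- arXiv:1804.00085 — 3 statements merged into one kernel-verified Lean document; each statement's English description precedes it below -/
import Mathlib

section
/- σ²(c) = 1222685807050467558645782547163492 / 4561296506512477081905890170847375, where c = 277/665. -/
open scoped BigOperators

/-- `V x ξ = min x ξ - x * ξ`. -/
noncomputable def V (x ξ : ℝ) : ℝ := min x ξ - x * ξ

/-- `σ²(x) = V(⟨x⟩, ⟨x⟩) + 2 ∑_{k=1}^∞ 6^{-k} V(⟨2^k x⟩, ⟨3^k x⟩)`. -/
noncomputable def sigmaSq (x : ℝ) : ℝ :=
  V (Int.fract x) (Int.fract x) +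
    2 * ∑' k : ℕ, (1 / 6 ^ (k + 1) : ℝ) *
      V (Int.fract ((2 : ℝ) ^ (k + 1) * x)) (Int.fract ((3 : ℝ) ^ (k + 1) * x))

/-- `c = 277/665 = 277/(3^6 - 2^6)`. -/
noncomputable def c : ℝ := 277 / 665

/-!
Since `2^36 ≡ 3^36 ≡ 1 (mod 665)`, the pair `(⟨2^k c⟩, ⟨3^k c⟩)` is periodic in `k` with period 36,
so the series in `σ²(c)` is geometric in blocks of 36 terms with ratio `6^{-36}`: its sum is the
first block divided by `1 - 6^{-36}`, and the first block is a finite rational computation.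
-/

open Finset

lemma tsum_eq_sum_range_div_of_add_period {K : Type*} [Field K] [TopologicalSpace K]
    [IsTopologicalRing K] [T2Space K] {f : ℕ → K} (hf : Summable f) {p : ℕ} {r : K}
    (hr : r ≠ 1) (hper : ∀ k, f (k + p) = r * f k) :
    ∑' k, f k = (∑ k ∈ range p, f k) / (1 - r) := by
  have hsplit := hf.sum_add_tsum_nat_add p
  simp_rw [hper, tsum_mul_left] at hsplit
  rw [eq_div_iff (sub_ne_zero.2 hr.symm)]
  linear_combination -hsplit

lemma fract_pow_add_mul_of_fract_pow_mul (a : ℤ) {p : ℕ} {x : ℝ}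
    (h : Int.fract ((a : ℝ) ^ p * x) = Int.fract x) (k : ℕ) :
    Int.fract ((a : ℝ) ^ (k + p) * x) = Int.fract ((a : ℝ) ^ k * x) := by
  obtain ⟨z, hz⟩ := Int.fract_eq_fract.1 h
  refine Int.fract_eq_fract.2 ⟨a ^ k * z, ?_⟩
  push_cast
  rw [← hz]
  ring

noncomputable def sigmaSqTerm (x : ℝ) (k : ℕ) : ℝ :=
  (1 / 6 ^ (k + 1) : ℝ) * V (Int.fract ((2 : ℝ) ^ (k + 1) * x)) (Int.fract ((3 : ℝ) ^ (k + 1) * x))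

lemma sigmaSq_eq_add_tsum (x : ℝ) :
    sigmaSq x = V (Int.fract x) (Int.fract x) + 2 * ∑' k, sigmaSqTerm x k :=
  rfl

lemma abs_V_le_one {x ξ : ℝ} (hx : x ∈ Set.Icc 0 1) (hξ : ξ ∈ Set.Icc 0 1) : |V x ξ| ≤ 1 := by
  obtain ⟨hx0, hx1⟩ := hx
  obtain ⟨hξ0, hξ1⟩ := hξ
  have hmin_le : min x ξ ≤ x := min_le_left _ _
  have hmin_nonneg : 0 ≤ min x ξ := le_min hx0 hξ0
  rw [abs_le, V]
  constructor <;> nlinarith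

lemma abs_sigmaSqTerm_le (x : ℝ) (k : ℕ) : |sigmaSqTerm x k| ≤ (1 / 6) ^ (k + 1) := by
  have hfract (y : ℝ) : Int.fract y ∈ Set.Icc (0 : ℝ) 1 :=
    ⟨Int.fract_nonneg y, (Int.fract_lt_one y).le⟩
  rw [sigmaSqTerm, abs_mul, one_div_pow, abs_of_pos (by positivity)]
  exact mul_le_of_le_one_right (by positivity) (abs_V_le_one (hfract _) (hfract _))

lemma summable_sigmaSqTerm (x : ℝ) : Summable (sigmaSqTerm x) :=
  .of_norm_bounded ((summable_nat_add_iff 1).2 (summable_geometric_of_lt_one (by norm_num)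
    (by norm_num))) (abs_sigmaSqTerm_le x)

lemma sigmaSqTerm_add_period {x : ℝ} {p : ℕ} (h2 : Int.fract (2 ^ p * x) = Int.fract x)
    (h3 : Int.fract (3 ^ p * x) = Int.fract x) (k : ℕ) :
    sigmaSqTerm x (k + p) = (6 ^ p)⁻¹ * sigmaSqTerm x k := by
  have h2' := fract_pow_add_mul_of_fract_pow_mul 2 (by exact_mod_cast h2) (k + 1)
  have h3' := fract_pow_add_mul_of_fract_pow_mul 3 (by exact_mod_cast h3) (k + 1)
  push_cast at h2' h3'
  rw [sigmaSqTerm, sigmaSqTerm, Nat.add_right_comm, h2', h3']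
  ring

lemma sum_range_sigmaSqTerm_c : ∑ k ∈ range 36, sigmaSqTerm c k
    = 14266585925987345035675768816039 / 1140324126628119270476472542822400 := by
  simp only [sum_range_succ, sum_range_zero, sigmaSqTerm, V, c]
  norm_num [min_def]

theorem sigmaSq_c_value :
    sigmaSq c =
      1222685807050467558645782547163492 / 4561296506512477081905890170847375 := by
  have h2 : Int.fract (2 ^ 36 * c) = Int.fract c := by norm_num [c]
  have h3 : Int.fract (3 ^ 36 * c) = Int.fract c := by norm_num [c]
  rw [sigmaSq_eq_add_tsum, tsum_eq_sum_range_div_of_add_period (summable_sigmaSqTerm c)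
    (by norm_num) (sigmaSqTerm_add_period h2 h3), sum_range_sigmaSqTerm_c]
  norm_num [V, c, min_def]
end

section
/- For every x ∈ [0, 1/3), one has σ²(x) < σ²(c). -/
open scoped BigOperators

lemma V_nonneg' {a b : ℝ} (ha : 0 ≤ a) (hb : 0 ≤ b) (ha1 : a ≤ 1) (hb1 : b ≤ 1) :
    0 ≤ V a b := by
  rcases le_total a b with h | h
  · unfold V; rw [min_eq_left h]; nlinarith
  · unfold V; rw [min_eq_right h]; nlinarith

lemma V_le_quarter {a b : ℝ} (ha : 0 ≤ a) (hb : 0 ≤ b) : V a b ≤ 1/4 := by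
  rcases le_total a b with h | h
  · unfold V; rw [min_eq_left h]
    nlinarith [sq_nonneg (a - 1/2), mul_nonneg ha (sub_nonneg.2 h)]
  · unfold V; rw [min_eq_right h]
    nlinarith [sq_nonneg (b - 1/2), mul_nonneg hb (sub_nonneg.2 h)]

/-- The general term of the series in `sigmaSq`. -/
noncomputable def f (x : ℝ) (k : ℕ) : ℝ :=
  (1 / 6 ^ (k + 1) : ℝ) *
      V (Int.fract ((2 : ℝ) ^ (k + 1) * x)) (Int.fract ((3 : ℝ) ^ (k + 1) * x))

lemma f_nonneg (x : ℝ) (k : ℕ) : 0 ≤ f x k := by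
  apply mul_nonneg (by positivity)
  exact V_nonneg' (Int.fract_nonneg _) (Int.fract_nonneg _)
    (Int.fract_lt_one _).le (Int.fract_lt_one _).le

lemma f_le (x : ℝ) (k : ℕ) : f x k ≤ (1/4 : ℝ) * (1/6) ^ (k + 1) := by
  have h1 : (1 / 6 ^ (k + 1) : ℝ) = (1/6 : ℝ) ^ (k+1) := by
    rw [one_div, one_div, inv_pow]
  unfold f
  rw [h1, mul_comm ((1/4:ℝ)) _]
  apply mul_le_mul_of_nonneg_left _ (by positivity)
  exact V_le_quarter (Int.fract_nonneg _) (Int.fract_nonneg _)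

lemma summable_g : Summable (fun k : ℕ => (1/4 : ℝ) * (1/6) ^ (k + 1)) := by
  have h : Summable (fun k : ℕ => (1/6 : ℝ) ^ k) :=
    summable_geometric_of_lt_one (by norm_num) (by norm_num)
  exact (h.mul_left ((1/4 : ℝ) * (1/6))).congr (fun k => by ring)

lemma summable_f (x : ℝ) : Summable (f x) :=
  Summable.of_nonneg_of_le (f_nonneg x) (f_le x) summable_g

lemma sigmaSq_eq (x : ℝ) :
    sigmaSq x = V (Int.fract x) (Int.fract x) + 2 * (f x 0 + ∑' k : ℕ, f x (k + 1)) := by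
  unfold sigmaSq
  rw [show (∑' k : ℕ, (1 / 6 ^ (k + 1) : ℝ) *
      V (Int.fract ((2 : ℝ) ^ (k + 1) * x)) (Int.fract ((3 : ℝ) ^ (k + 1) * x))) = ∑' k, f x k
      from rfl]
  rw [Summable.tsum_eq_zero_add (summable_f x)]

lemma tail_le (x : ℝ) : ∑' k : ℕ, f x (k + 1) ≤ 1 / 120 := by
  have hsum : Summable (fun k : ℕ => (1/4 : ℝ) * (1/6) ^ (k + 2)) := by
    have : Summable (fun k : ℕ => (1/6 : ℝ) ^ k) :=
      summable_geometric_of_lt_one (by norm_num) (by norm_num)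
    exact (this.mul_left ((1/4 : ℝ) * (1/6)^2)).congr (fun k => by ring)
  have h1 : ∑' k : ℕ, f x (k + 1) ≤ ∑' k : ℕ, (1/4 : ℝ) * (1/6) ^ (k + 2) :=
    Summable.tsum_le_tsum (fun k => f_le x (k + 1)) ((summable_nat_add_iff 1).2 (summable_f x)) hsum
  have h2 : ∑' k : ℕ, (1/4 : ℝ) * (1/6 : ℝ) ^ (k + 2) = 1 / 120 := by
    have he : ∀ k : ℕ, (1/4 : ℝ) * (1/6 : ℝ) ^ (k + 2) = (1/144 : ℝ) * (1/6) ^ k := by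
      intro k; ring
    rw [tsum_congr he, tsum_mul_left,
      tsum_geometric_of_lt_one (by norm_num) (by norm_num)]
    norm_num
  linarith

theorem sigmaSq_lt_on_interval_7 (x : ℝ) (hx : x ∈ Set.Ico (0 : ℝ) (1/3)) :
    sigmaSq x < sigmaSq c := by
  obtain ⟨hx0, hx3⟩ := hx
  -- Upper bound for sigmaSq x
  have hfx : Int.fract x = x := Int.fract_eq_self.2 ⟨hx0, by linarith⟩
  have hf2 : Int.fract ((2:ℝ)^(0+1) * x) = 2 * x := by
    rw [show (2:ℝ)^(0+1) * x = 2 * x by norm_num]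
    exact Int.fract_eq_self.2 ⟨by linarith, by linarith⟩
  have hf3 : Int.fract ((3:ℝ)^(0+1) * x) = 3 * x := by
    rw [show (3:ℝ)^(0+1) * x = 3 * x by norm_num]
    exact Int.fract_eq_self.2 ⟨by linarith, by linarith⟩
  have hfx0 : f x 0 = (1/6) * (2*x - 6*x^2) := by
    unfold f
    rw [hf2, hf3]
    unfold V
    rw [min_eq_left (by linarith : (2:ℝ)*x ≤ 3*x)]
    ring
  have hupper : sigmaSq x ≤ x - x^2 + 2 * ((1/6) * (2*x - 6*x^2) + 1/120) := by
    rw [sigmaSq_eq x, hfx, hfx0]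
    have hVx : V x x = x - x^2 := by unfold V; rw [min_self]; ring
    rw [hVx]
    have := tail_le x
    linarith
  -- Lower bound for sigmaSq c
  have hc2 : Int.fract ((2:ℝ)^(0+1) * c) = 554/665 := by
    have : (2:ℝ)^(0+1) * c = 554/665 := by norm_num [c]
    rw [this]
    exact Int.fract_eq_self.2 ⟨by norm_num, by norm_num⟩
  have hc3 : Int.fract ((3:ℝ)^(0+1) * c) = 166/665 := by
    have : (3:ℝ)^(0+1) * c = (166/665 : ℝ) + 1 := by norm_num [c]
    rw [this, Int.fract_add_one]
    exact Int.fract_eq_self.2 ⟨by norm_num, by norm_num⟩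
  have hfc0 : f c 0 = (1/6) * (18426/442225) := by
    unfold f
    rw [hc2, hc3]
    unfold V
    rw [min_eq_right (by norm_num : (166:ℝ)/665 ≤ 554/665)]
    norm_num
  have hfractc : Int.fract c = c := Int.fract_eq_self.2 ⟨by norm_num [c], by norm_num [c]⟩
  have hlower : (107476/442225 : ℝ) + 2 * ((1/6) * (18426/442225)) ≤ sigmaSq c := by
    rw [sigmaSq_eq c, hfractc, hfc0]
    have hVc : V c c = 107476/442225 := by
      unfold V; rw [min_self]; norm_num [c]
    rw [hVc]
    have htail : 0 ≤ ∑' k : ℕ, f c (k + 1) := tsum_nonneg (fun k => f_nonneg c (k + 1))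
    linarith
  -- conclude
  have : x - x^2 + 2 * ((1/6) * (2*x - 6*x^2) + 1/120)
      < (107476/442225 : ℝ) + 2 * ((1/6) * (18426/442225)) := by
    nlinarith [sq_nonneg (x - 5/18)]
  linarith
end

section
/- For every x ∈ [911/2187, 858/2059), one has σ²(x) < σ²(c). (Here 2187 = 3^7.) -/
/-!
The summands of the series are nonnegative and the `k`-th one is at most `6⁻ᵏ / 4`, so the
partial sum with eight summands bounds `σ²` from below, and from above up to `6⁻⁸ / 10`.
On each of `[911/2187, 2734/6561)` and `[2734/6561, 858/2059)` none of `2ᵏ x`, `3ᵏ x` (`k ≤ 8`)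
crosses an integer, so every fractional part is affine in `x` and the partial sum is at most a
concave quadratic `-17 x² + β x + γ` whose vertex lies left of the piece. Its value at the left
endpoint stays about `2 · 10⁻⁷` below the partial sum at `c` minus `6⁻⁸ / 10`.
-/

open scoped BigOperators

open Finset

theorem V_nonneg {a b : ℝ} (ha₀ : 0 ≤ a) (ha₁ : a ≤ 1) (hb₀ : 0 ≤ b) (hb₁ : b ≤ 1) :
    0 ≤ V a b := by
  rcases le_total a b with h | h
  · rw [V, min_eq_left h]; nlinarith
  · rw [V, min_eq_right h]; nlinarith

theorem V_le_one_fourth {a b : ℝ} (ha : 0 ≤ a) (hb : 0 ≤ b) : V a b ≤ 1 / 4 := by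
  rcases le_total a b with h | h
  · rw [V, min_eq_left h]; nlinarith [sq_nonneg (a - 1 / 2)]
  · rw [V, min_eq_right h]; nlinarith [sq_nonneg (b - 1 / 2)]

theorem V_of_le {a b : ℝ} (h : a ≤ b) : V a b = a - a * b := by
  rw [V, min_eq_left h]

theorem V_of_ge {a b : ℝ} (h : b ≤ a) : V a b = b - a * b := by
  rw [V, min_eq_right h]

theorem V_le_sub_mul_right (a b : ℝ) : V a b ≤ b - a * b :=
  sub_le_sub_right (min_le_right a b) _

theorem V_fract_nonneg (a b : ℝ) : 0 ≤ V (Int.fract a) (Int.fract b) :=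
  V_nonneg (Int.fract_nonneg a) (Int.fract_lt_one a).le (Int.fract_nonneg b)
    (Int.fract_lt_one b).le

theorem fract_mul_eq_of_mem_Ico {m lo hi x : ℝ} (hx : x ∈ Set.Ico lo hi) (hm : 0 < m)
    (hhi : m * hi ≤ ⌊m * lo⌋ + 1) : Int.fract (m * x) = m * x - ⌊m * lo⌋ := by
  rw [Int.fract, sub_right_inj, Int.cast_inj, Int.floor_eq_iff]
  exact ⟨(Int.floor_le _).trans (mul_le_mul_of_nonneg_left hx.1 hm.le),
    (mul_lt_mul_of_pos_left hx.2 hm).trans_le hhi⟩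

noncomputable def sigmaTerm (x : ℝ) (k : ℕ) : ℝ :=
  1 / 6 ^ (k + 1) * V (Int.fract ((2 : ℝ) ^ (k + 1) * x)) (Int.fract ((3 : ℝ) ^ (k + 1) * x))

noncomputable def partialSigmaSq (N : ℕ) (x : ℝ) : ℝ :=
  V (Int.fract x) (Int.fract x) + 2 * ∑ k ∈ range N, sigmaTerm x k

section sigmaTerm

variable (x : ℝ) (k : ℕ)

theorem sigmaTerm_nonneg : 0 ≤ sigmaTerm x k :=
  mul_nonneg (by positivity) (V_fract_nonneg _ _)

theorem sigmaTerm_le : sigmaTerm x k ≤ 1 / 4 * (1 / 6) ^ (k + 1) := by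
  rw [sigmaTerm, mul_comm (1 / 4 : ℝ), one_div_pow]
  exact mul_le_mul_of_nonneg_left
    (V_le_one_fourth (Int.fract_nonneg _) (Int.fract_nonneg _)) (by positivity)

theorem summable_sigmaTerm : Summable (sigmaTerm x) :=
  .of_nonneg_of_le (sigmaTerm_nonneg x) (sigmaTerm_le x)
    (((summable_geometric_of_lt_one (by norm_num) (by norm_num : (1 / 6 : ℝ) < 1)).mul_left
      (1 / 24)).congr fun k ↦ by ring)

end sigmaTerm

theorem sigmaSq_eq_partialSigmaSq_add_tsum (N : ℕ) (x : ℝ) :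
    sigmaSq x = partialSigmaSq N x + 2 * ∑' k, sigmaTerm x (k + N) := by
  rw [partialSigmaSq, add_assoc, ← mul_add, (summable_sigmaTerm x).sum_add_tsum_nat_add N]
  rfl

theorem partialSigmaSq_le_sigmaSq (N : ℕ) (x : ℝ) : partialSigmaSq N x ≤ sigmaSq x := by
  rw [sigmaSq_eq_partialSigmaSq_add_tsum N]
  have : 0 ≤ ∑' k, sigmaTerm x (k + N) := tsum_nonneg fun k ↦ sigmaTerm_nonneg x (k + N)
  linarith

theorem tsum_sigmaTerm_add_le (N : ℕ) (x : ℝ) :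
    ∑' k, sigmaTerm x (k + N) ≤ 1 / (20 * 6 ^ N) := by
  have hsum : (1 / 4 * (1 / 6) ^ (N + 1) * (1 - 1 / 6)⁻¹ : ℝ) = 1 / (20 * 6 ^ N) := by
    rw [one_div_pow, pow_succ]; field_simp; norm_num
  have hgeom := (hasSum_geometric_of_lt_one (r := (1 / 6 : ℝ)) (by norm_num) (by norm_num)).mul_left
    (1 / 4 * (1 / 6) ^ (N + 1))
  rw [hsum] at hgeom
  exact hasSum_le (fun k ↦ (sigmaTerm_le x (k + N)).trans_eq (by ring))
    ((summable_nat_add_iff N).2 (summable_sigmaTerm x)).hasSum hgeom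

theorem sigmaSq_le_partialSigmaSq_add (N : ℕ) (x : ℝ) :
    sigmaSq x ≤ partialSigmaSq N x + 1 / (10 * 6 ^ N) := by
  rw [sigmaSq_eq_partialSigmaSq_add_tsum N]
  have := tsum_sigmaTerm_add_le N x
  have h : 2 * (1 / (20 * 6 ^ N) : ℝ) = 1 / (10 * 6 ^ N) := by field_simp; ring
  linarith

theorem partialSigmaSq_eight_c : partialSigmaSq 8 c = 4147998539 / 15474337200 := by
  norm_num [partialSigmaSq, sigmaTerm, sum_range_succ, V, c]

theorem partialSigmaSq_eight_le_of_mem_Ico {x : ℝ}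
    (hx : x ∈ Set.Ico (911 / 2187 : ℝ) (2734 / 6561)) :
    partialSigmaSq 8 x ≤ -17 * x ^ 2 + 3963493 / 279936 * x - 750217 / 279936 := by
  -- for `k = 8` the arguments `256 * x - 106` and `6561 * x - 2733` of `V` cross inside the piece
  obtain ⟨hlo, hhi⟩ := id hx
  norm_num [partialSigmaSq, sigmaTerm, sum_range_succ]
  simp (disch := norm_num) only [fract_mul_eq_of_mem_Ico hx]
  rw [Int.fract_eq_self.2 ⟨by linarith, by linarith⟩]
  norm_num
  simp (disch := grind) only [V_of_le, V_of_ge]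
  linarith [V_le_sub_mul_right (256 * x - 106) (6561 * x - 2733)]

theorem partialSigmaSq_eight_eq_of_mem_Ico {x : ℝ}
    (hx : x ∈ Set.Ico (2734 / 6561 : ℝ) (858 / 2059)) :
    partialSigmaSq 8 x = -17 * x ^ 2 + 11890735 / 839808 * x - 1125379 / 419904 := by
  obtain ⟨hlo, hhi⟩ := id hx
  norm_num [partialSigmaSq, sigmaTerm, sum_range_succ]
  simp (disch := norm_num) only [fract_mul_eq_of_mem_Ico hx]
  rw [Int.fract_eq_self.2 ⟨by linarith, by linarith⟩]
  norm_num
  simp (disch := grind) only [V_of_le, V_of_ge]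
  ring

theorem sigmaSq_lt_on_interval_16 (x : ℝ) (hx : x ∈ Set.Ico (911/2187 : ℝ) (858/2059)) :
    sigmaSq x < sigmaSq c := by
  obtain ⟨hlo, hhi⟩ := hx
  have htrunc : partialSigmaSq 8 x + 1 / (10 * 6 ^ 8) < partialSigmaSq 8 c := by
    rw [partialSigmaSq_eight_c]
    rcases lt_or_ge x (2734 / 6561) with hmid | hmid
    · have := partialSigmaSq_eight_le_of_mem_Ico ⟨hlo, hmid⟩
      linarith [sq_nonneg (x - 911 / 2187)]
    · rw [partialSigmaSq_eight_eq_of_mem_Ico ⟨hmid, hhi⟩]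
      linarith [sq_nonneg (x - 2734 / 6561)]
  calc sigmaSq x ≤ partialSigmaSq 8 x + 1 / (10 * 6 ^ 8) := sigmaSq_le_partialSigmaSq_add 8 x
    _ < partialSigmaSq 8 c := htrunc
    _ ≤ sigmaSq c := partialSigmaSq_le_sigmaSq 8 c
end
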